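/- arXiv:1307.0539 — 2 statements merged into one kernel-verified Lean document; each statement's English description precedes it below -/
import Mathlib

section
/- Suppose 0 ≤ α ≤ 1, β ≥ 0, and that either p_ii ≥ 1/2 for all i ∈ V, or P is doubly stochastic and n ≥ 4. Then the real symmetric matrix I − αL⁺ + βL⁻ − U is positive semidefinite, i.e., every eigenvalue of I − αL⁺ + βL⁻ − U is nonnegative. -/
open Matrix MeasureTheory Filter
open scoped ENNReal

noncomputable section

namespace SignedOpinion

/-- The vector `e i - e j` in `ℝⁿ`. -/
def esub {n : ℕ} (i j : Fin n) : Fin n → ℝ :=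
  fun k => (if k = i then (1 : ℝ) else 0) - (if k = j then (1 : ℝ) else 0)

/-- The rank-one matrix `(e i - e j) (e i - e j)ᵀ`. -/
def dmatAux {n : ℕ} (i j : Fin n) : Matrix (Fin n) (Fin n) ℝ :=
  Matrix.vecMulVec (esub i j) (esub i j)

lemma dmatAux_symm {n : ℕ} (i j : Fin n) : dmatAux i j = dmatAux j i := by
  ext a b
  simp only [dmatAux, esub, Matrix.vecMulVec_apply]
  ring

/-- `(e i - e j)(e i - e j)ᵀ` as a function of the unordered pair `{i, j}`. -/
def dmat {n : ℕ} : Sym2 (Fin n) → Matrix (Fin n) (Fin n) ℝ :=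
  Sym2.lift ⟨dmatAux, dmatAux_symm⟩

/-- The averaging matrix `U = 𝟙𝟙ᵀ / n`. -/
def Umat (n : ℕ) : Matrix (Fin n) (Fin n) ℝ :=
  (n : ℝ)⁻¹ • Matrix.of (fun _ _ => (1 : ℝ))

/-- The positive update matrix `W⁺_{ij} = I - α (e i - e j)(e i - e j)ᵀ`. -/
def Wpos {n : ℕ} (α : ℝ) (e : Sym2 (Fin n)) : Matrix (Fin n) (Fin n) ℝ :=
  1 - α • dmat e

/-- The negative update matrix `W⁻_{ij} = I + β (e i - e j)(e i - e j)ᵀ`. -/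
def Wneg {n : ℕ} (β : ℝ) (e : Sym2 (Fin n)) : Matrix (Fin n) (Fin n) ℝ :=
  1 + β • dmat e

/-- The edge selection probability `μ({i,j}) = (p i j + p j i) / n`. -/
def edgeWeight {n : ℕ} (P : Matrix (Fin n) (Fin n) ℝ) : Sym2 (Fin n) → ℝ :=
  Sym2.lift ⟨fun i j => (P i j + P j i) / n, fun i j => by show (P i j + P j i) / n = (P j i + P i j) / n; rw [add_comm (P i j)]⟩

/-- The weighted Laplacian of the graph on `Fin n` with edge set `Es`,
with weight `edgeWeight P e` on the edge `e`. -/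
def lap {n : ℕ} (P : Matrix (Fin n) (Fin n) ℝ) (Es : Finset (Sym2 (Fin n))) :
    Matrix (Fin n) (Fin n) ℝ :=
  ∑ e ∈ Es, edgeWeight P e • dmat e

/-- The unit-weight (standard) Laplacian of the graph with edge set `Es`. -/
def lapStd {n : ℕ} (Es : Finset (Sym2 (Fin n))) : Matrix (Fin n) (Fin n) ℝ :=
  ∑ e ∈ Es, dmat e

/-- Largest (real) eigenvalue of a matrix. For a real symmetric matrix this is
`λ_max`. -/
def lamMax {n : ℕ} (M : Matrix (Fin n) (Fin n) ℝ) : ℝ :=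
  sSup {t : ℝ | ∃ v : Fin n → ℝ, v ≠ 0 ∧ M *ᵥ v = t • v}

/-- Smallest (real) eigenvalue of a matrix. -/
def lamMin {n : ℕ} (M : Matrix (Fin n) (Fin n) ℝ) : ℝ :=
  sInf {t : ℝ | ∃ v : Fin n → ℝ, v ≠ 0 ∧ M *ᵥ v = t • v}

/-- Second smallest eigenvalue of a (connected-graph) Laplacian: the smallest
eigenvalue attained by an eigenvector orthogonal to the all-ones vector. -/
def lam2 {n : ℕ} (M : Matrix (Fin n) (Fin n) ℝ) : ℝ :=
  sInf {t : ℝ | ∃ v : Fin n → ℝ, v ≠ 0 ∧ (∑ i, v i = 0) ∧ M *ᵥ v = t • v}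

/-- `P` is row-stochastic. -/
def RowStochastic {n : ℕ} (P : Matrix (Fin n) (Fin n) ℝ) : Prop :=
  (∀ i j, 0 ≤ P i j) ∧ ∀ i, ∑ j, P i j = 1

/-- `P` complies with the graph with edge set `E`. -/
def Complies {n : ℕ} (P : Matrix (Fin n) (Fin n) ℝ) (E : Finset (Sym2 (Fin n))) : Prop :=
  ∀ i j : Fin n, i ≠ j → 0 < P i j → s(i, j) ∈ E

/-- The simple graph on `Fin n` with edge set `E`. -/
def graphOf {n : ℕ} (E : Finset (Sym2 (Fin n))) : SimpleGraph (Fin n) :=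
  SimpleGraph.fromEdgeSet (↑E)

/-- `diam x = max_i x i - min_i x i`  (the quantity `𝔛` of the paper). -/
def diam {n : ℕ} (x : Fin n → ℝ) : ℝ := (⨆ i, x i) - ⨅ i, x i

/-- Selection alphabet `E ∪ {∗}` : an unordered node pair, or no selection. -/
abbrev Sel (n : ℕ) := Option (Sym2 (Fin n))

instance (n : ℕ) : MeasurableSpace (Sel n) := ⊤

/-- The update matrix triggered by a selection. -/
def Wsel {n : ℕ} (α β : ℝ) (Epst Eneg : Finset (Sym2 (Fin n))) :
    Sel n → Matrix (Fin n) (Fin n) ℝ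
  | none => 1
  | some e => if e ∈ Epst then Wpos α e else if e ∈ Eneg then Wneg β e else 1

/-- The belief process `x(k)` driven by the selection sequence `ω`. -/
def xproc {n : ℕ} (α β : ℝ) (Epst Eneg : Finset (Sym2 (Fin n))) (x0 : Fin n → ℝ)
    (ω : ℕ → Sel n) : ℕ → Fin n → ℝ
  | 0 => x0
  | k + 1 => Wsel α β Epst Eneg (ω k) *ᵥ xproc α β Epst Eneg x0 ω k

/-- The matrix product `W(k) W(k-1) ⋯ W(0)`. -/
def Wprod {n : ℕ} (α β : ℝ) (Epst Eneg : Finset (Sym2 (Fin n))) (ω : ℕ → Sel n) :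
    ℕ → Matrix (Fin n) (Fin n) ℝ
  | 0 => Wsel α β Epst Eneg (ω 0)
  | k + 1 => Wsel α β Epst Eneg (ω (k + 1)) * Wprod α β Epst Eneg ω k

/-- The one-step selection distribution `μ` on `E ∪ {∗}`. -/
def seldist {n : ℕ} (P : Matrix (Fin n) (Fin n) ℝ) (E : Finset (Sym2 (Fin n))) :
    Sel n → ℝ≥0∞
  | none => ENNReal.ofReal (1 - ∑ e ∈ E, edgeWeight P e)
  | some e => if e ∈ E then ENNReal.ofReal (edgeWeight P e) else 0

/-- `ℙ` is the infinite product of `seldist P E`: the coordinates are i.i.d.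
with per-coordinate distribution `seldist P E` (characterized on cylinders). -/
def IsIIDSel {n : ℕ} (ℙ : Measure (ℕ → Sel n)) (P : Matrix (Fin n) (Fin n) ℝ)
    (E : Finset (Sym2 (Fin n))) : Prop :=
  ∀ (K : Finset ℕ) (v : ℕ → Sel n),
    ℙ {ω | ∀ k ∈ K, ω k = v k} = ∏ k ∈ K, seldist P E (v k)

/-- Selection alphabet for the asymmetric constrained model:
an ordered node pair (or `∗`), together with a tag in `{1,2,3}`. -/
abbrev Sel2 (n : ℕ) := Option (Fin n × Fin n) × Fin 3

instance (n : ℕ) : MeasurableSpace (Sel2 n) := ⊤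

/-- weights `a, b, c` on the tags. -/
def wabc (a b c : ℝ) : Fin 3 → ℝ := ![a, b, c]

/-- Per-step distribution for the asymmetric constrained model: the pair
`({i,j}, t)` (represented by its ordered representative with `i < j`) has mass
`(wabc a b c t) · μ({i,j})`, and `(∗, t)` has mass `(wabc a b c t) · μ(∗)`. -/
def seldist2 {n : ℕ} (P : Matrix (Fin n) (Fin n) ℝ) (E : Finset (Sym2 (Fin n)))
    (a b c : ℝ) : Sel2 n → ℝ≥0∞
  | (none, t) => ENNReal.ofReal (wabc a b c t) * ENNReal.ofReal (1 - ∑ e ∈ E, edgeWeight P e)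
  | (some (i, j), t) =>
      if i < j ∧ s(i, j) ∈ E then
        ENNReal.ofReal (wabc a b c t) * ENNReal.ofReal (edgeWeight P s(i, j))
      else 0

/-- `ℙ` is the infinite product of `seldist2 P E a b c`. -/
def IsIIDSel2 {n : ℕ} (ℙ : Measure (ℕ → Sel2 n)) (P : Matrix (Fin n) (Fin n) ℝ)
    (E : Finset (Sym2 (Fin n))) (a b c : ℝ) : Prop :=
  ∀ (K : Finset ℕ) (v : ℕ → Sel2 n),
    ℙ {ω | ∀ k ∈ K, ω k = v k} = ∏ k ∈ K, seldist2 P E a b c (v k)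

/-- Projection onto `[-A, A]`. -/
def projA (A z : ℝ) : ℝ := max (-A) (min A z)

/-- `θ(e) = α` on positive edges, `-β` on negative edges. -/
def theta {n : ℕ} (α β : ℝ) (Epst Eneg : Finset (Sym2 (Fin n))) (e : Sym2 (Fin n)) : ℝ :=
  if e ∈ Epst then α else if e ∈ Eneg then -β else 0

/-- One step of the asymmetric constrained update. -/
def cstep {n : ℕ} (α β A : ℝ) (Epst Eneg : Finset (Sym2 (Fin n))) :
    Sel2 n → (Fin n → ℝ) → (Fin n → ℝ)
  | (none, _), x => x
  | (some (i, j), t), x =>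
      if t = 0 then
        Function.update x i
          (projA A ((1 - theta α β Epst Eneg s(i, j)) * x i + theta α β Epst Eneg s(i, j) * x j))
      else if t = 1 then
        Function.update x j
          (projA A ((1 - theta α β Epst Eneg s(i, j)) * x j + theta α β Epst Eneg s(i, j) * x i))
      else
        Function.update
          (Function.update x i
            (projA A ((1 - theta α β Epst Eneg s(i, j)) * x i + theta α β Epst Eneg s(i, j) * x j)))
          j
          (projA A ((1 - theta α β Epst Eneg s(i, j)) * x j + theta α β Epst Eneg s(i, j) * x i))

/-- The constrained asymmetric belief process. -/
def cproc {n : ℕ} (α β A : ℝ) (Epst Eneg : Finset (Sym2 (Fin n))) (x0 : Fin n → ℝ)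
    (ω : ℕ → Sel2 n) : ℕ → Fin n → ℝ
  | 0 => x0
  | k + 1 => cstep α β A Epst Eneg (ω k) (cproc α β A Epst Eneg x0 ω k)



/-!
Write `I - αL⁺ + βL⁻ - U = (I - U - L⁺) + (1 - α)L⁺ + βL⁻`. Laplacians with nonnegative weights
are positive semidefinite, so it suffices that `xᵀL⁺x ≤ xᵀ(I - U)x = ∑ xᵢ² - (∑ xᵢ)² / n`.
Enlarging `E_pst` to all pairs and counting each pair from both ends gives
`n xᵀL⁺x ≤ ∑ᵢⱼ pᵢⱼ (xᵢ - xⱼ)²`. If `pᵢᵢ ≥ 1/2` then `pᵢⱼ ≤ 1/2` for `i ≠ j`, and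
`½ ∑ᵢⱼ (xᵢ - xⱼ)² = n ∑ xᵢ² - (∑ xᵢ)²`. If `P` is doubly stochastic, then
`(xᵢ - xⱼ)² ≤ 2(xᵢ - c)² + 2(xⱼ - c)²` with `c` the mean of `x` bounds the sum by
`4 ∑ (xᵢ - c)² ≤ n ∑ (xᵢ - c)²`.
-/

open Finset

section Sums

variable {ι : Type*} [Fintype ι]

theorem sum_sub_sq_eq (x : ι → ℝ) (c : ℝ) :
    ∑ i, (x i - c) ^ 2 = ∑ i, x i ^ 2 - 2 * (∑ i, x i) * c + Fintype.card ι * c ^ 2 := by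
  simp only [sub_sq, sum_add_distrib, sum_sub_distrib, ← sum_mul, ← mul_sum, sum_const,
    card_univ, nsmul_eq_mul]

theorem sum_sum_sub_sq (x : ι → ℝ) :
    ∑ i, ∑ j, (x i - x j) ^ 2 = 2 * (Fintype.card ι * ∑ i, x i ^ 2 - (∑ i, x i) ^ 2) := by
  simp only [sub_sq, sum_add_distrib, sum_sub_distrib, ← sum_mul, ← mul_sum, sum_const,
    card_univ, nsmul_eq_mul]
  ring

theorem card_mul_sum_sub_mean_sq [Nonempty ι] (x : ι → ℝ) :
    Fintype.card ι * ∑ i, (x i - (∑ j, x j) / Fintype.card ι) ^ 2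
      = Fintype.card ι * ∑ i, x i ^ 2 - (∑ i, x i) ^ 2 := by
  rw [sum_sub_sq_eq]
  field_simp
  ring

theorem sum_mul_sub_sq_le_of_half_le_diag {P : Matrix ι ι ℝ} (hP0 : ∀ i j, 0 ≤ P i j)
    (hrow : ∀ i, ∑ j, P i j = 1) (hdiag : ∀ i, 1 / 2 ≤ P i i) (x : ι → ℝ) :
    ∑ i, ∑ j, P i j * (x i - x j) ^ 2 ≤ Fintype.card ι * ∑ i, x i ^ 2 - (∑ i, x i) ^ 2 := by
  have hoff : ∀ i j, i ≠ j → P i j ≤ 1 / 2 := fun i j hij => by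
    have := add_le_sum (fun k _ => hP0 i k) (mem_univ i) (mem_univ j) hij
    linarith [hrow i, hdiag i]
  calc ∑ i, ∑ j, P i j * (x i - x j) ^ 2 ≤ ∑ i, ∑ j, 1 / 2 * (x i - x j) ^ 2 := by
        refine sum_le_sum fun i _ => sum_le_sum fun j _ => ?_
        rcases eq_or_ne i j with rfl | hij
        · simp
        · exact mul_le_mul_of_nonneg_right (hoff i j hij) (sq_nonneg _)
    _ = Fintype.card ι * ∑ i, x i ^ 2 - (∑ i, x i) ^ 2 := by
        simp only [← mul_sum, sum_sum_sub_sq]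
        ring

theorem sum_mul_sub_sq_le_four_mul {P : Matrix ι ι ℝ} (hP0 : ∀ i j, 0 ≤ P i j)
    (hrow : ∀ i, ∑ j, P i j = 1) (hcol : ∀ j, ∑ i, P i j = 1) (x : ι → ℝ) (c : ℝ) :
    ∑ i, ∑ j, P i j * (x i - x j) ^ 2 ≤ 4 * ∑ i, (x i - c) ^ 2 := by
  calc ∑ i, ∑ j, P i j * (x i - x j) ^ 2
      ≤ ∑ i, ∑ j, (2 * (P i j * (x i - c) ^ 2) + 2 * (P i j * (x j - c) ^ 2)) := by
        refine sum_le_sum fun i _ => sum_le_sum fun j _ => ?_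
        nlinarith [mul_nonneg (hP0 i j) (sq_nonneg (x i + x j - 2 * c))]
    _ = 2 * ∑ i, (∑ j, P i j) * (x i - c) ^ 2 + 2 * ∑ j, (∑ i, P i j) * (x j - c) ^ 2 := by
        simp only [sum_add_distrib, ← mul_sum, sum_mul]
        congr 2
        exact sum_comm
    _ = 4 * ∑ i, (x i - c) ^ 2 := by
        simp only [hrow, hcol, one_mul]
        ring

theorem sum_mul_sub_sq_le_of_doublyStochastic {P : Matrix ι ι ℝ} (hP0 : ∀ i j, 0 ≤ P i j)
    (hrow : ∀ i, ∑ j, P i j = 1) (hcol : ∀ j, ∑ i, P i j = 1) (hcard : 4 ≤ Fintype.card ι)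
    (x : ι → ℝ) :
    ∑ i, ∑ j, P i j * (x i - x j) ^ 2 ≤ Fintype.card ι * ∑ i, x i ^ 2 - (∑ i, x i) ^ 2 := by
  have : Nonempty ι := Fintype.card_pos_iff.mp (by omega)
  have hfour := sum_mul_sub_sq_le_four_mul hP0 hrow hcol x ((∑ j, x j) / Fintype.card ι)
  have hmean := card_mul_sum_sub_mean_sq x
  have hcard' : (4 : ℝ) ≤ Fintype.card ι := by exact_mod_cast hcard
  nlinarith [sum_nonneg fun i (_ : i ∈ univ) => sq_nonneg (x i - (∑ j, x j) / Fintype.card ι)]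

end Sums

theorem two_nsmul_sum_le_sum_sum_sym2 {α M : Type*} [Fintype α] [DecidableEq α]
    [AddCommMonoid M] [PartialOrder M] [IsOrderedAddMonoid M] {E : Finset (Sym2 α)}
    (hE : ∀ e ∈ E, ¬ e.IsDiag) {f : Sym2 α → M} (hf : ∀ e, 0 ≤ f e) :
    2 • ∑ e ∈ E, f e ≤ ∑ a, ∑ b, f s(a, b) := by
  have hfiber : ∀ e ∈ E, #{p : α × α | s(p.1, p.2) = e} = 2 := by
    intro e he
    induction e using Sym2.ind with
    | _ a b =>
      have hab : a ≠ b := fun h => hE _ he (by simp [h])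
      have : ({p : α × α | s(p.1, p.2) = s(a, b)} : Finset (α × α)) = {(a, b), (b, a)} := by
        ext ⟨c, d⟩
        simp
      rw [this, card_pair (by simp [hab])]
  calc 2 • ∑ e ∈ E, f e = ∑ e ∈ E, ∑ p : α × α with s(p.1, p.2) = e, f e := by
        rw [smul_sum]
        refine sum_congr rfl fun e he => ?_
        rw [sum_const, hfiber e he]
    _ = ∑ p : α × α with s(p.1, p.2) ∈ E, f s(p.1, p.2) :=
        sum_fiberwise_eq_sum_filter' _ _ _ _
    _ ≤ ∑ p : α × α, f s(p.1, p.2) :=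
        sum_le_sum_of_subset_of_nonneg (filter_subset _ _) fun p _ _ => hf _
    _ = ∑ a, ∑ b, f s(a, b) := Fintype.sum_prod_type _

section Laplacian

variable {n : ℕ}

theorem dmat_mk (i j : Fin n) : dmat s(i, j) = vecMulVec (esub i j) (esub i j) := rfl

theorem dotProduct_dmat_mulVec (i j : Fin n) (x : Fin n → ℝ) :
    x ⬝ᵥ (dmat s(i, j) *ᵥ x) = (x i - x j) ^ 2 := by
  have hesub : esub i j ⬝ᵥ x = x i - x j := by
    simp [esub, dotProduct, sub_mul, sum_sub_distrib]
  rw [dmat_mk, vecMulVec_mulVec, op_smul_eq_smul, dotProduct_smul, smul_eq_mul, dotProduct_comm x,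
    hesub, sq]

theorem posSemidef_dmat (e : Sym2 (Fin n)) : (dmat e).PosSemidef := by
  induction e using Sym2.ind with
  | _ i j => simpa [dmat_mk] using posSemidef_vecMulVec_self_star (esub i j)

theorem edgeWeight_mk (P : Matrix (Fin n) (Fin n) ℝ) (i j : Fin n) :
    edgeWeight P s(i, j) = (P i j + P j i) / n := rfl

theorem edgeWeight_nonneg {P : Matrix (Fin n) (Fin n) ℝ} (hP0 : ∀ i j, 0 ≤ P i j)
    (e : Sym2 (Fin n)) : 0 ≤ edgeWeight P e := by
  induction e using Sym2.ind with
  | _ i j => exact div_nonneg (add_nonneg (hP0 i j) (hP0 j i)) n.cast_nonneg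

theorem posSemidef_lap {P : Matrix (Fin n) (Fin n) ℝ} (hP0 : ∀ i j, 0 ≤ P i j)
    (Es : Finset (Sym2 (Fin n))) : (lap P Es).PosSemidef :=
  posSemidef_sum _ fun e _ => (posSemidef_dmat e).smul (edgeWeight_nonneg hP0 e)

theorem dotProduct_lap_mulVec_le {P : Matrix (Fin n) (Fin n) ℝ} (hP0 : ∀ i j, 0 ≤ P i j)
    {Es : Finset (Sym2 (Fin n))} (hEs : ∀ e ∈ Es, ¬ e.IsDiag) (x : Fin n → ℝ) :
    x ⬝ᵥ (lap P Es *ᵥ x) ≤ (∑ i, ∑ j, P i j * (x i - x j) ^ 2) / n := by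
  set g : Fin n → Fin n → ℝ := fun i j => P i j * (x i - x j) ^ 2
  set f : Sym2 (Fin n) → ℝ := fun e => edgeWeight P e * (x ⬝ᵥ (dmat e *ᵥ x))
  have hf : ∀ e, 0 ≤ f e := fun e => mul_nonneg (edgeWeight_nonneg hP0 e)
    (by simpa using (posSemidef_dmat e).dotProduct_mulVec_nonneg x)
  have hf_mk : ∀ a b, f s(a, b) = (g a b + g b a) / n := fun a b => by
    simp only [f, g, edgeWeight_mk, dotProduct_dmat_mulVec]
    ring
  have hquad : x ⬝ᵥ (lap P Es *ᵥ x) = ∑ e ∈ Es, f e := by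
    simp only [lap, sum_mulVec, dotProduct_sum, smul_mulVec, dotProduct_smul, smul_eq_mul, f]
  have hpairs : ∑ a, ∑ b, f s(a, b) = 2 * ((∑ a, ∑ b, g a b) / n) := by
    simp only [hf_mk, ← sum_div, sum_add_distrib]
    rw [sum_comm (f := fun a b => g b a)]
    ring
  have htwo := two_nsmul_sum_le_sum_sum_sym2 hEs hf
  rw [hpairs, two_nsmul] at htwo
  rw [hquad]
  linarith

theorem dotProduct_Umat_mulVec (x : Fin n → ℝ) :
    x ⬝ᵥ (Umat n *ᵥ x) = (∑ i, x i) ^ 2 / n := by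
  simp only [dotProduct, mulVec, Umat, Matrix.smul_apply, of_apply, smul_eq_mul, mul_one,
    ← mul_sum, ← sum_mul]
  ring

theorem isHermitian_Umat (n : ℕ) : (Umat n).IsHermitian := by
  ext i j
  simp [Umat]

theorem posSemidef_one_sub_Umat_sub_lap (hn : 0 < n) {P : Matrix (Fin n) (Fin n) ℝ}
    (hP0 : ∀ i j, 0 ≤ P i j) {Es : Finset (Sym2 (Fin n))} (hEs : ∀ e ∈ Es, ¬ e.IsDiag)
    (hbound : ∀ x : Fin n → ℝ,
      ∑ i, ∑ j, P i j * (x i - x j) ^ 2 ≤ n * ∑ i, x i ^ 2 - (∑ i, x i) ^ 2) :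
    (1 - Umat n - lap P Es).PosSemidef := by
  refine .of_dotProduct_mulVec_nonneg
    ((isHermitian_one.sub (isHermitian_Umat n)).sub (posSemidef_lap hP0 Es).isHermitian)
    fun x => ?_
  have hn' : (0 : ℝ) < n := by exact_mod_cast hn
  have hlap := (le_div_iff₀ hn').mp (dotProduct_lap_mulVec_le hP0 hEs x)
  have hsq : x ⬝ᵥ x = ∑ i, x i ^ 2 := by simp [dotProduct, sq]
  rw [star_trivial, sub_mulVec, sub_mulVec, one_mulVec, dotProduct_sub, dotProduct_sub,
    dotProduct_Umat_mulVec, hsq, sub_sub, sub_nonneg, div_add' _ _ _ hn'.ne', div_le_iff₀ hn']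
  linarith [hbound x]

end Laplacian

theorem expected_update_matrix_posSemidef_general
    (n : ℕ) (hn : 3 ≤ n)
    (Epst Eneg : Finset (Sym2 (Fin n)))
    (hloop : ∀ e ∈ Epst ∪ Eneg, ¬ e.IsDiag)
    (P : Matrix (Fin n) (Fin n) ℝ)
    (hP : RowStochastic P)
    (α β : ℝ) (hα1 : α ≤ 1) (hβ : 0 ≤ β)
    (hassum : (∀ i, (1 : ℝ) / 2 ≤ P i i) ∨ ((∀ j, ∑ i, P i j = 1) ∧ 4 ≤ n)) :
    (1 - α • lap P Epst + β • lap P Eneg - Umat n).PosSemidef := by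
  obtain ⟨hP0, hrow⟩ := hP
  have hbound (x : Fin n → ℝ) :
      ∑ i, ∑ j, P i j * (x i - x j) ^ 2 ≤ n * ∑ i, x i ^ 2 - (∑ i, x i) ^ 2 := by
    rcases hassum with hdiag | ⟨hcol, hn4⟩
    · simpa using sum_mul_sub_sq_le_of_half_le_diag hP0 hrow hdiag x
    · simpa using sum_mul_sub_sq_le_of_doublyStochastic hP0 hrow hcol (by simpa using hn4) x
  have hpst := posSemidef_one_sub_Umat_sub_lap (by omega) hP0
    (fun e he => hloop e (mem_union_left _ he)) hbound
  have hsplit : 1 - α • lap P Epst + β • lap P Eneg - Umat n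
      = (1 - Umat n - lap P Epst) + (1 - α) • lap P Epst + β • lap P Eneg := by
    module
  rw [hsplit]
  exact (hpst.add ((posSemidef_lap hP0 Epst).smul (by linarith))).add
    ((posSemidef_lap hP0 Eneg).smul hβ)

theorem expected_update_matrix_posSemidef
    (n : ℕ) (hn : 3 ≤ n)
    (Epst Eneg : Finset (Sym2 (Fin n)))
    (hdisj : Disjoint Epst Eneg)
    (hloop : ∀ e ∈ Epst ∪ Eneg, ¬ e.IsDiag)
    (P : Matrix (Fin n) (Fin n) ℝ)
    (hP : RowStochastic P)
    (hPc : Complies P (Epst ∪ Eneg))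
    (hconn : (graphOf (Epst ∪ Eneg)).Connected)
    (hneg : Eneg.Nonempty)
    (α β : ℝ) (hα0 : 0 ≤ α) (hα1 : α ≤ 1) (hβ : 0 ≤ β)
    (hassum : (∀ i, (1 : ℝ) / 2 ≤ P i i) ∨ ((∀ j, ∑ i, P i j = 1) ∧ 4 ≤ n)) :
    (1 - α • lap P Epst + β • lap P Eneg - Umat n).PosSemidef :=
  expected_update_matrix_posSemidef_general n hn Epst Eneg hloop P hP α β hα1 hβ hassum

end SignedOpinion
end
end

section
/- Let W be a random n×n matrix taking the value W⁺_{ij} with probability μ({i,j}) for each {i,j} ∈ E_pst, the value W⁻_{ij} with probability μ({i,j}) for each {i,j} ∈ E_neg, and the value I with probability μ(∗) (so all expectations below are finite sums over E ∪ {∗}). Then E[W²] = I − 2α(1−α)L⁺ + 2β(1+β)L⁻, and for every x ∈ ℝⁿ: λ_min(E[W²] − U)·|(I−U)x|² ≤ E[|(I−U)Wx|²] ≤ λ_max(E[W²] − U)·|(I−U)x|², where |·| is the Euclidean norm. -/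
open Matrix MeasureTheory Filter
open scoped ENNReal

noncomputable section

namespace SignedOpinion

/-!
Since `D = (e_i - e_j)(e_i - e_j)ᵀ` satisfies `D² = 2D`, one has `(W⁺)² = I - 2α(1-α)D` and
`(W⁻)² = I + 2β(1+β)D`; averaging over `μ` gives `E[W²]`. Every update matrix `W` is symmetric
and fixes `𝟙`, so `WU = UW = U` and `|(I - U)Wx|² = xᵀ(W² - U)x`. Averaging,
`E|(I - U)Wx|² = xᵀ(E[W²] - U)x = yᵀ(E[W²] - U)y` with `y = (I - U)x`, because `E[W²] - U` is
symmetric and kills `𝟙`; the Rayleigh bounds for this symmetric matrix finish the proof.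
-/

section Spectral

variable {ι : Type*} [Fintype ι]

lemma sum_sq_eq_dotProduct_self (v : ι → ℝ) : ∑ i, v i ^ 2 = v ⬝ᵥ v := by
  simp [dotProduct, sq]

lemma dotProduct_mulVec_comm_of_transpose_eq {A : Matrix ι ι ℝ} (hA : Aᵀ = A) (u v : ι → ℝ) :
    (A *ᵥ u) ⬝ᵥ v = u ⬝ᵥ (A *ᵥ v) := by
  rw [dotProduct_mulVec, ← mulVec_transpose, hA]

variable [DecidableEq ι] {M : Matrix ι ι ℝ}

lemma setOf_mulVec_eq_smul_subset_spectrum :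
    {t : ℝ | ∃ v : ι → ℝ, v ≠ 0 ∧ M *ᵥ v = t • v} ⊆ spectrum ℝ M := by
  rintro t ⟨v, hv, h⟩
  rw [← Matrix.spectrum_toLin', ← Module.End.hasEigenvalue_iff_mem_spectrum]
  exact Module.End.hasEigenvalue_of_hasEigenvector
    ⟨Module.End.mem_eigenspace_iff.mpr (by simpa using h), hv⟩

lemma eigenvalues_mem_setOf_mulVec_eq_smul (hM : M.IsHermitian) (i : ι) :
    hM.eigenvalues i ∈ {t : ℝ | ∃ v : ι → ℝ, v ≠ 0 ∧ M *ᵥ v = t • v} :=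
  ⟨hM.eigenvectorBasis i, by simpa using hM.eigenvectorBasis.orthonormal.ne_zero i,
    hM.mulVec_eigenvectorBasis i⟩

lemma sum_dotProduct_eigenvectorBasis_mul (hM : M.IsHermitian) (u v : ι → ℝ) :
    ∑ i, (hM.eigenvectorBasis i ⬝ᵥ u) * (hM.eigenvectorBasis i ⬝ᵥ v) = u ⬝ᵥ v := by
  simpa [EuclideanSpace.inner_eq_star_dotProduct, dotProduct_comm] using
    hM.eigenvectorBasis.sum_inner_mul_inner (WithLp.toLp 2 u) (WithLp.toLp 2 v)

lemma sum_sq_eq_sum_dotProduct_eigenvectorBasis_sq (hM : M.IsHermitian) (x : ι → ℝ) :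
    ∑ i, x i ^ 2 = ∑ i, (hM.eigenvectorBasis i ⬝ᵥ x) ^ 2 := by
  rw [sum_sq_eq_dotProduct_self, ← sum_dotProduct_eigenvectorBasis_mul hM x x]
  simp only [sq]

lemma dotProduct_mulVec_eq_sum_eigenvalues (hM : M.IsHermitian) (x : ι → ℝ) :
    x ⬝ᵥ (M *ᵥ x) = ∑ i, hM.eigenvalues i * (hM.eigenvectorBasis i ⬝ᵥ x) ^ 2 := by
  rw [← sum_dotProduct_eigenvectorBasis_mul hM]
  refine Finset.sum_congr rfl fun i _ => ?_
  rw [← dotProduct_mulVec_comm_of_transpose_eq (isHermitian_iff_isSymm.mp hM),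
    hM.mulVec_eigenvectorBasis, smul_dotProduct, smul_eq_mul]
  ring

end Spectral

section RayleighBounds

variable {n : ℕ} {M : Matrix (Fin n) (Fin n) ℝ}

lemma lamMin_le_eigenvalues (hM : M.IsHermitian) (i : Fin n) : lamMin M ≤ hM.eigenvalues i :=
  csInf_le ((Matrix.finite_real_spectrum (A := M)).subset setOf_mulVec_eq_smul_subset_spectrum).bddBelow
    (eigenvalues_mem_setOf_mulVec_eq_smul hM i)

lemma eigenvalues_le_lamMax (hM : M.IsHermitian) (i : Fin n) : hM.eigenvalues i ≤ lamMax M :=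
  le_csSup ((Matrix.finite_real_spectrum (A := M)).subset setOf_mulVec_eq_smul_subset_spectrum).bddAbove
    (eigenvalues_mem_setOf_mulVec_eq_smul hM i)

lemma lamMin_mul_sum_sq_le (hM : M.IsHermitian) (x : Fin n → ℝ) :
    lamMin M * ∑ i, x i ^ 2 ≤ x ⬝ᵥ (M *ᵥ x) := by
  rw [sum_sq_eq_sum_dotProduct_eigenvectorBasis_sq hM, dotProduct_mulVec_eq_sum_eigenvalues hM,
    Finset.mul_sum]
  gcongr with i
  exact lamMin_le_eigenvalues hM i

lemma dotProduct_mulVec_le_lamMax_mul_sum_sq (hM : M.IsHermitian) (x : Fin n → ℝ) :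
    x ⬝ᵥ (M *ᵥ x) ≤ lamMax M * ∑ i, x i ^ 2 := by
  rw [sum_sq_eq_sum_dotProduct_eigenvectorBasis_sq hM, dotProduct_mulVec_eq_sum_eigenvalues hM,
    Finset.mul_sum]
  gcongr with i
  exact eigenvalues_le_lamMax hM i

end RayleighBounds

section Consensus

variable {n : ℕ}

lemma Umat_transpose (n : ℕ) : (Umat n)ᵀ = Umat n := by
  ext a b
  simp [Umat]

lemma Umat_mul_self (n : ℕ) : Umat n * Umat n = Umat n := by
  ext a b
  have hn : (n : ℝ) ≠ 0 := Nat.cast_ne_zero.mpr a.pos.ne'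
  simp [Umat, mul_apply]
  field_simp

lemma one_sub_Umat_transpose (n : ℕ) : (1 - Umat n)ᵀ = 1 - Umat n := by
  rw [transpose_sub, transpose_one, Umat_transpose]

lemma sum_sq_one_sub_Umat_mulVec {A : Matrix (Fin n) (Fin n) ℝ} (hA : Aᵀ = A)
    (hAU : A * Umat n = Umat n) (x : Fin n → ℝ) :
    ∑ i, ((1 - Umat n) *ᵥ (A *ᵥ x)) i ^ 2 = x ⬝ᵥ ((A * A - Umat n) *ᵥ x) := by
  have hUA : Umat n * A = Umat n := by
    rw [← hA, ← Umat_transpose, ← transpose_mul, hAU]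
  have hproj : (1 - Umat n) * A = A - Umat n := by rw [sub_mul, one_mul, hUA]
  have hsymm : (A - Umat n)ᵀ = A - Umat n := by rw [transpose_sub, hA, Umat_transpose]
  have hsq : (A - Umat n) * (A - Umat n) = A * A - Umat n := by
    rw [sub_mul, mul_sub, mul_sub, hAU, hUA, Umat_mul_self]
    abel
  rw [mulVec_mulVec, hproj, sum_sq_eq_dotProduct_self,
    dotProduct_mulVec_comm_of_transpose_eq hsymm, mulVec_mulVec, hsq]

lemma dotProduct_mulVec_one_sub_Umat {M : Matrix (Fin n) (Fin n) ℝ} (hM : Mᵀ = M)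
    (hMU : M * Umat n = 0) (x : Fin n → ℝ) :
    ((1 - Umat n) *ᵥ x) ⬝ᵥ (M *ᵥ ((1 - Umat n) *ᵥ x)) = x ⬝ᵥ (M *ᵥ x) := by
  have hproj : M * (1 - Umat n) = M := by rw [mul_sub, mul_one, hMU, sub_zero]
  have hproj' : (1 - Umat n) * M = M := by
    rw [← one_sub_Umat_transpose, ← hM, ← transpose_mul, hM, hproj, hM]
  rw [mulVec_mulVec, hproj, dotProduct_mulVec_comm_of_transpose_eq (one_sub_Umat_transpose n),
    mulVec_mulVec, hproj']

end Consensus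

section EdgeMatrices

variable {n : ℕ}

lemma sum_esub (i j : Fin n) : ∑ k, esub i j k = 0 := by
  simp [esub, Finset.sum_sub_distrib]

lemma esub_dotProduct_self {i j : Fin n} (h : i ≠ j) : esub i j ⬝ᵥ esub i j = 2 := by
  simp [esub, dotProduct, mul_sub, Finset.sum_sub_distrib, h, h.symm]
  norm_num

lemma dmat_transpose (e : Sym2 (Fin n)) : (dmat e)ᵀ = dmat e := by
  induction e using Sym2.ind with
  | _ i j => exact transpose_vecMulVec _ _

lemma dmat_mul_self {e : Sym2 (Fin n)} (h : ¬ e.IsDiag) : dmat e * dmat e = (2 : ℝ) • dmat e := by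
  induction e using Sym2.ind with
  | _ i j =>
    show dmatAux i j * dmatAux i j = (2 : ℝ) • dmatAux i j
    rw [dmatAux, vecMulVec_mul_vecMulVec, esub_dotProduct_self (by simpa using h), vecMulVec_smul]

lemma dmat_mul_Umat (e : Sym2 (Fin n)) : dmat e * Umat n = 0 := by
  induction e using Sym2.ind with
  | _ i j =>
    ext a b
    simp [dmat, dmatAux, Umat, mul_apply, vecMulVec_apply, mul_assoc, ← Finset.mul_sum,
      ← Finset.sum_mul, sum_esub]

lemma Wpos_transpose (α : ℝ) (e : Sym2 (Fin n)) : (Wpos α e)ᵀ = Wpos α e := by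
  simp [Wpos, dmat_transpose]

lemma Wneg_transpose (β : ℝ) (e : Sym2 (Fin n)) : (Wneg β e)ᵀ = Wneg β e := by
  simp [Wneg, dmat_transpose]

lemma Wpos_mul_Umat (α : ℝ) (e : Sym2 (Fin n)) : Wpos α e * Umat n = Umat n := by
  simp [Wpos, sub_mul, dmat_mul_Umat]

lemma Wneg_mul_Umat (β : ℝ) (e : Sym2 (Fin n)) : Wneg β e * Umat n = Umat n := by
  simp [Wneg, add_mul, dmat_mul_Umat]

lemma Wpos_mul_self (α : ℝ) {e : Sym2 (Fin n)} (h : ¬ e.IsDiag) :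
    Wpos α e * Wpos α e = 1 - (2 * α * (1 - α)) • dmat e := by
  simp only [Wpos, sub_mul, mul_sub, one_mul, mul_one, Matrix.smul_mul, Matrix.mul_smul,
    dmat_mul_self h, smul_smul]
  module

lemma Wneg_mul_self (β : ℝ) {e : Sym2 (Fin n)} (h : ¬ e.IsDiag) :
    Wneg β e * Wneg β e = 1 + (2 * β * (1 + β)) • dmat e := by
  simp only [Wneg, add_mul, mul_add, one_mul, mul_one, Matrix.smul_mul, Matrix.mul_smul,
    dmat_mul_self h, smul_smul]
  module

lemma lap_transpose (P : Matrix (Fin n) (Fin n) ℝ) (Es : Finset (Sym2 (Fin n))) :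
    (lap P Es)ᵀ = lap P Es := by
  simp [lap, transpose_sum, dmat_transpose]

lemma lap_mul_Umat (P : Matrix (Fin n) (Fin n) ℝ) (Es : Finset (Sym2 (Fin n))) :
    lap P Es * Umat n = 0 := by
  simp [lap, Finset.sum_mul, dmat_mul_Umat]

end EdgeMatrices

section SecondMoment

variable {n : ℕ} (P : Matrix (Fin n) (Fin n) ℝ) (α β : ℝ) (Epst Eneg : Finset (Sym2 (Fin n)))

/-- `E[W²]` for the selection distribution `μ` on `E ∪ {∗}`. -/
def secondMoment : Matrix (Fin n) (Fin n) ℝ :=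
  (∑ e ∈ Epst, edgeWeight P e • (Wpos α e * Wpos α e)) +
    (∑ e ∈ Eneg, edgeWeight P e • (Wneg β e * Wneg β e)) +
    (1 - ∑ e ∈ Epst ∪ Eneg, edgeWeight P e) • (1 : Matrix (Fin n) (Fin n) ℝ)

variable {P α β Epst Eneg}

lemma secondMoment_eq (hdisj : Disjoint Epst Eneg) (hloop : ∀ e ∈ Epst ∪ Eneg, ¬ e.IsDiag) :
    secondMoment P α β Epst Eneg =
      1 - (2 * α * (1 - α)) • lap P Epst + (2 * β * (1 + β)) • lap P Eneg := by
  have hpos : ∑ e ∈ Epst, edgeWeight P e • (Wpos α e * Wpos α e) =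
      (∑ e ∈ Epst, edgeWeight P e) • 1 - (2 * α * (1 - α)) • lap P Epst := by
    rw [lap, Finset.smul_sum, Finset.sum_smul, ← Finset.sum_sub_distrib]
    refine Finset.sum_congr rfl fun e he => ?_
    rw [Wpos_mul_self α (hloop e (Finset.mem_union_left _ he))]
    module
  have hneg : ∑ e ∈ Eneg, edgeWeight P e • (Wneg β e * Wneg β e) =
      (∑ e ∈ Eneg, edgeWeight P e) • 1 + (2 * β * (1 + β)) • lap P Eneg := by
    rw [lap, Finset.smul_sum, Finset.sum_smul, ← Finset.sum_add_distrib]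
    refine Finset.sum_congr rfl fun e he => ?_
    rw [Wneg_mul_self β (hloop e (Finset.mem_union_right _ he))]
    module
  rw [secondMoment, hpos, hneg, Finset.sum_union hdisj]
  module

lemma expected_sum_sq_eq (hdisj : Disjoint Epst Eneg) (x : Fin n → ℝ) :
    (∑ e ∈ Epst, edgeWeight P e * (∑ i, (((1 - Umat n) *ᵥ (Wpos α e *ᵥ x)) i) ^ 2)) +
      (∑ e ∈ Eneg, edgeWeight P e * (∑ i, (((1 - Umat n) *ᵥ (Wneg β e *ᵥ x)) i) ^ 2)) +
      (1 - ∑ e ∈ Epst ∪ Eneg, edgeWeight P e) * (∑ i, (((1 - Umat n) *ᵥ x) i) ^ 2) =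
    x ⬝ᵥ ((secondMoment P α β Epst Eneg - Umat n) *ᵥ x) := by
  have hone : ∑ i, (((1 - Umat n) *ᵥ x) i) ^ 2 = x ⬝ᵥ ((1 * 1 - Umat n) *ᵥ x) := by
    simpa using sum_sq_one_sub_Umat_mulVec transpose_one (one_mul (Umat n)) x
  simp only [sum_sq_one_sub_Umat_mulVec (Wpos_transpose α _) (Wpos_mul_Umat α _),
    sum_sq_one_sub_Umat_mulVec (Wneg_transpose β _) (Wneg_mul_Umat β _), hone]
  rw [secondMoment, Finset.sum_union hdisj]
  simp only [sub_mulVec, add_mulVec, smul_mulVec, sum_mulVec, dotProduct_sub, dotProduct_add,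
    dotProduct_smul, dotProduct_sum, smul_eq_mul, mul_sub, Finset.sum_sub_distrib,
    ← Finset.sum_mul, one_mul]
  ring

end SecondMoment

theorem expected_square_update_general
    (n : ℕ)
    (Epst Eneg : Finset (Sym2 (Fin n)))
    (hdisj : Disjoint Epst Eneg)
    (hloop : ∀ e ∈ Epst ∪ Eneg, ¬ e.IsDiag)
    (P : Matrix (Fin n) (Fin n) ℝ)
    (α β : ℝ)
    (EW2 : Matrix (Fin n) (Fin n) ℝ)
    (hEW2 : EW2 = (∑ e ∈ Epst, edgeWeight P e • (Wpos α e * Wpos α e)) +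
      (∑ e ∈ Eneg, edgeWeight P e • (Wneg β e * Wneg β e)) +
      (1 - ∑ e ∈ Epst ∪ Eneg, edgeWeight P e) • (1 : Matrix (Fin n) (Fin n) ℝ)) :
    EW2 = 1 - (2 * α * (1 - α)) • lap P Epst + (2 * β * (1 + β)) • lap P Eneg ∧
    ∀ x : Fin n → ℝ,
      lamMin (EW2 - Umat n) * (∑ i, (((1 - Umat n) *ᵥ x) i) ^ 2) ≤
        (∑ e ∈ Epst, edgeWeight P e * (∑ i, (((1 - Umat n) *ᵥ (Wpos α e *ᵥ x)) i) ^ 2)) +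
        (∑ e ∈ Eneg, edgeWeight P e * (∑ i, (((1 - Umat n) *ᵥ (Wneg β e *ᵥ x)) i) ^ 2)) +
        (1 - ∑ e ∈ Epst ∪ Eneg, edgeWeight P e) * (∑ i, (((1 - Umat n) *ᵥ x) i) ^ 2) ∧
      (∑ e ∈ Epst, edgeWeight P e * (∑ i, (((1 - Umat n) *ᵥ (Wpos α e *ᵥ x)) i) ^ 2)) +
        (∑ e ∈ Eneg, edgeWeight P e * (∑ i, (((1 - Umat n) *ᵥ (Wneg β e *ᵥ x)) i) ^ 2)) +
        (1 - ∑ e ∈ Epst ∪ Eneg, edgeWeight P e) * (∑ i, (((1 - Umat n) *ᵥ x) i) ^ 2) ≤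
      lamMax (EW2 - Umat n) * (∑ i, (((1 - Umat n) *ᵥ x) i) ^ 2) := by
  replace hEW2 : EW2 = secondMoment P α β Epst Eneg := hEW2
  have hEW2_lap := hEW2.trans (secondMoment_eq hdisj hloop)
  refine ⟨hEW2_lap, fun x => ?_⟩
  have hsymm : (EW2 - Umat n)ᵀ = EW2 - Umat n := by
    simp only [hEW2_lap, transpose_sub, transpose_add, transpose_smul, transpose_one,
      lap_transpose, Umat_transpose]
  have hfix : (EW2 - Umat n) * Umat n = 0 := by
    simp only [hEW2_lap, sub_mul, add_mul, one_mul, Matrix.smul_mul, lap_mul_Umat, smul_zero,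
      sub_zero, add_zero, Umat_mul_self, sub_self]
  have hM : (EW2 - Umat n).IsHermitian := isHermitian_iff_isSymm.mpr hsymm
  rw [expected_sum_sq_eq hdisj x, ← hEW2, ← dotProduct_mulVec_one_sub_Umat hsymm hfix x]
  exact ⟨lamMin_mul_sum_sq_le hM _, dotProduct_mulVec_le_lamMax_mul_sum_sq hM _⟩

theorem expected_square_update
    (n : ℕ) (hn : 3 ≤ n)
    (Epst Eneg : Finset (Sym2 (Fin n)))
    (hdisj : Disjoint Epst Eneg)
    (hloop : ∀ e ∈ Epst ∪ Eneg, ¬ e.IsDiag)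
    (P : Matrix (Fin n) (Fin n) ℝ)
    (hP : RowStochastic P)
    (hPc : Complies P (Epst ∪ Eneg))
    (α β : ℝ) (hα0 : 0 ≤ α) (hα1 : α ≤ 1) (hβ : 0 ≤ β)
    (EW2 : Matrix (Fin n) (Fin n) ℝ)
    (hEW2 : EW2 = (∑ e ∈ Epst, edgeWeight P e • (Wpos α e * Wpos α e)) +
      (∑ e ∈ Eneg, edgeWeight P e • (Wneg β e * Wneg β e)) +
      (1 - ∑ e ∈ Epst ∪ Eneg, edgeWeight P e) • (1 : Matrix (Fin n) (Fin n) ℝ)) :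
    EW2 = 1 - (2 * α * (1 - α)) • lap P Epst + (2 * β * (1 + β)) • lap P Eneg ∧
    ∀ x : Fin n → ℝ,
      lamMin (EW2 - Umat n) * (∑ i, (((1 - Umat n) *ᵥ x) i) ^ 2) ≤
        (∑ e ∈ Epst, edgeWeight P e * (∑ i, (((1 - Umat n) *ᵥ (Wpos α e *ᵥ x)) i) ^ 2)) +
        (∑ e ∈ Eneg, edgeWeight P e * (∑ i, (((1 - Umat n) *ᵥ (Wneg β e *ᵥ x)) i) ^ 2)) +
        (1 - ∑ e ∈ Epst ∪ Eneg, edgeWeight P e) * (∑ i, (((1 - Umat n) *ᵥ x) i) ^ 2) ∧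
      (∑ e ∈ Epst, edgeWeight P e * (∑ i, (((1 - Umat n) *ᵥ (Wpos α e *ᵥ x)) i) ^ 2)) +
        (∑ e ∈ Eneg, edgeWeight P e * (∑ i, (((1 - Umat n) *ᵥ (Wneg β e *ᵥ x)) i) ^ 2)) +
        (1 - ∑ e ∈ Epst ∪ Eneg, edgeWeight P e) * (∑ i, (((1 - Umat n) *ᵥ x) i) ^ 2) ≤
      lamMax (EW2 - Umat n) * (∑ i, (((1 - Umat n) *ᵥ x) i) ^ 2) :=
  expected_square_update_general n Epst Eneg hdisj hloop P α β EW2 hEW2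

end SignedOpinion
end
end
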